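/- Let G = (V, E) be a finite simple graph and let P_G be the program over atoms V consisting, for every edge {a, b} ∈ E, of the two purely negative clauses a ← not(b) (i.e., (a, ∅, {b})) and b ← not(a) (i.e., (b, ∅, {a})). Then a set M ⊆ V is a stable model of P_G if and only if V ∖ M is a maximal independent set of G (an independent set not properly contained in any other independent set of G). -/

import Mathlib

/-- A clause of a propositional logic program: an optional head (a definite
clause if `head = some h`, a constraint if `head = none`), a positive body
and a negative body. -/
structure LPClause (α : Type) where
  head : Option α
  pos : Finset α
  neg : Finset α
deriving DecidableEq

/-- A program is a finite set of clauses. -/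
abbrev LPProgram (α : Type) := Finset (LPClause α)

/-- The atoms occurring in a clause. -/
def LPClause.atoms {α : Type} [DecidableEq α] (c : LPClause α) : Finset α :=
  c.head.toFinset ∪ c.pos ∪ c.neg

/-- The atoms occurring in a program. -/
def LPProgram.atoms {α : Type} [DecidableEq α] (P : LPProgram α) : Finset α :=
  P.sup LPClause.atoms

/-- `N` is closed under the Horn rules of the reduct `P^M`: for every definite
clause of `P` whose negative body is disjoint from `M`, if its positive body
is contained in `N` then so is its head. -/
def ClosedUnder {α : Type} (P : LPProgram α) (M : Finset α) (N : Set α) : Prop :=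
  ∀ c ∈ P, ∀ h : α, c.head = some h → (∀ b ∈ c.neg, b ∉ M) →
    (↑c.pos : Set α) ⊆ N → h ∈ N

/-- `M` is a stable model of `P`: `M` is the least set closed under the rules
of the reduct `P^M` (i.e. `M = lm(P^M)`), and `M` satisfies every constraint
of `P`. -/
def IsStable {α : Type} (P : LPProgram α) (M : Finset α) : Prop :=
  ClosedUnder P M ↑M ∧ (∀ N : Set α, ClosedUnder P M N → ↑M ⊆ N) ∧
  ∀ c ∈ P, c.head = none → ¬(c.pos ⊆ M ∧ ∀ b ∈ c.neg, b ∉ M)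

/-- A set of vertices of a simple graph is independent if no two of its
elements are adjacent. -/
def IsIndepSet {V : Type} (G : SimpleGraph V) (S : Set V) : Prop :=
  ∀ a ∈ S, ∀ b ∈ S, ¬ G.Adj a b

/-- For a finite simple graph `G` on vertex set `V`, let `P_G` consist, for
each edge `{a,b}` of `G`, of the two clauses `a ← not(b)` and `b ← not(a)`.
Then `M ⊆ V` is a stable model of `P_G` iff `V \ M` is a maximal independent
set of `G`. -/
theorem stmt_14 {V : Type} [DecidableEq V] [Fintype V] (G : SimpleGraph V)
    (P : LPProgram V)
    (hP : ∀ c, c ∈ P ↔ ∃ a b, G.Adj a b ∧ c = ⟨some a, ∅, {b}⟩)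
    (M : Finset V) :
    IsStable P M ↔
      (IsIndepSet G ↑(Mᶜ) ∧
        ∀ S : Set V, IsIndepSet G S → ↑(Mᶜ) ⊆ S → S = ↑(Mᶜ)) := by

  constructor
  · rintro ⟨hcl, hmin, -⟩
    constructor
    · intro a ha b hb hab
      have hmem : (⟨some a, ∅, {b}⟩ : LPClause V) ∈ P := (hP _).2 ⟨a, b, hab, rfl⟩
      have hbM : b ∉ M := by simpa using hb
      have haM : a ∈ M := by
        have := hcl _ hmem a rfl (by intro x hx; simp at hx; subst hx; exact hbM)
          (by simp)
        exact_mod_cast this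
      have : a ∉ M := by simpa using ha
      exact this haM
    · intro S hS hsub
      have hclosed : ClosedUnder P M Sᶜ := by
        intro c hc h hh hneg _
        obtain ⟨a, b, hab, rfl⟩ := (hP c).1 hc
        simp only [Option.some.injEq] at hh
        subst hh
        have hbM : b ∉ M := hneg b (by simp)
        have hbS : b ∈ S := hsub (by simpa using hbM)
        intro haS
        exact hS a haS b hbS hab
      have hMS : (↑M : Set V) ⊆ Sᶜ := hmin Sᶜ hclosed
      ext x
      constructor
      · intro hx
        by_contra hxM
        have : x ∈ M := by simpa using hxM
        exact hMS (by exact_mod_cast this) hx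
      · exact fun hx => hsub hx
  · rintro ⟨hind, hmax⟩
    refine ⟨?_, ?_, ?_⟩
    · intro c hc h hh hneg _
      obtain ⟨a, b, hab, rfl⟩ := (hP c).1 hc
      simp only [Option.some.injEq] at hh
      subst hh
      have hbM : b ∉ M := hneg b (by simp)
      by_contra hhM
      have hhM' : a ∉ M := by simpa using hhM
      exact hind a (by simpa using hhM') b (by simpa using hbM) hab
    · intro N hN x hx
      have hxM : x ∈ M := by exact_mod_cast hx
      by_contra hxN
      -- Mᶜ ∪ {x} is not independent (by maximality), so x is adjacent to some y ∉ M
      have hnotind : ¬ IsIndepSet G (↑(Mᶜ) ∪ {x}) := by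
        intro hind'
        have := hmax _ hind' (Set.subset_union_left)
        have : x ∈ (↑(Mᶜ) : Set V) := this ▸ (Set.mem_union_right _ rfl)
        simp at this
        exact this hxM
      -- extract an adjacent pair
      have : ∃ y, y ∉ M ∧ G.Adj x y := by
        by_contra hno
        push_neg at hno
        apply hnotind
        intro a ha b hb hab
        rcases ha with ha | ha
        · rcases hb with hb | hb
          · exact hind a ha b hb hab
          · simp only [Set.mem_singleton_iff] at hb; subst hb
            exact hno a (by simpa using ha) (hab.symm)
        · simp only [Set.mem_singleton_iff] at ha; subst ha
          rcases hb with hb | hb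
          · exact hno b (by simpa using hb) hab
          · simp only [Set.mem_singleton_iff] at hb; subst hb
            exact G.irrefl hab
      obtain ⟨y, hyM, hxy⟩ := this
      have hmem : (⟨some x, ∅, {y}⟩ : LPClause V) ∈ P := (hP _).2 ⟨x, y, hxy, rfl⟩
      exact hxN (hN _ hmem x rfl (by intro b hb; simp at hb; subst hb; exact hyM) (by simp))
    · intro c hc hnone
      obtain ⟨a, b, _, rfl⟩ := (hP c).1 hc
      simp at hnone
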